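/- arXiv:2505.09533 — 5 statements merged into one kernel-verified Lean document; each statement's English description precedes it below -/
import Mathlib

section
/- For every ℓ ≥ 1, the expected number of transmissions E(ℓ,2) to recover a length-ℓ sequence of 2-composite symbols satisfies 1 + log_2(ℓ) + 1/(ℓ ln 2) ≤ E(ℓ,2) ≤ 2 + log_2(ℓ) + 1/ln 2. -/
/-!
Write `M = max_i X_i`. Then `E M = ∑_{m ≥ 0} P(M > m)`; the terms `m = 0, 1` equal `1`, and by
independence `P(M > k + 1) = 1 - (1 - 2^{-k})^ℓ = f k` for the function
`f x = 1 - (1 - 2^{-x})^ℓ`, which is antitone on `[0, ∞)`. The substitution `u = 1 - 2^{-x}` gives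
`∫_0^∞ f = (∑_{i=1}^ℓ 1/i) / ln 2 = H_ℓ / ln 2`, so comparing the sum `∑_{k ≥ 1} f k` with the
integral places it between `H_ℓ / ln 2 - 1` and `H_ℓ / ln 2`. The bounds
`ln ℓ + 1/ℓ ≤ H_ℓ ≤ ln ℓ + 1` finish the proof.
-/

open MeasureTheory ProbabilityTheory Finset Real Filter Topology

open scoped ENNReal

noncomputable def maxTail (b : ℝ) (ℓ : ℕ) (x : ℝ) : ℝ := 1 - (1 - b ^ (-x)) ^ ℓ

/-- With `u = 1 - b^{-x}` one has `u' = (1 - u) log b` and `∑_{i<ℓ} u^i (1 - u) = 1 - u^ℓ`, so this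
is a primitive of `maxTail b ℓ`. -/
noncomputable def maxTailPrimitive (b : ℝ) (ℓ : ℕ) (x : ℝ) : ℝ :=
  (∑ i ∈ range ℓ, (1 - b ^ (-x)) ^ (i + 1) / (i + 1)) / log b

lemma cast_harmonic (n : ℕ) : (harmonic n : ℝ) = ∑ i ∈ range n, 1 / ((i : ℝ) + 1) := by
  simp [harmonic]

lemma log_add_inv_le_harmonic {n : ℕ} (hn : n ≠ 0) : log n + (n : ℝ)⁻¹ ≤ harmonic n := by
  obtain ⟨m, rfl⟩ := Nat.exists_eq_succ_of_ne_zero hn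
  have := log_add_one_le_harmonic m
  rw [harmonic_succ]
  push_cast at this ⊢
  linarith

section MaxTail

variable {b : ℝ} (ℓ : ℕ)

lemma one_sub_rpow_neg_mem_Icc (hb : 1 < b) {x : ℝ} (hx : 0 ≤ x) :
    1 - b ^ (-x) ∈ Set.Icc (0 : ℝ) 1 := by
  have := rpow_le_one_of_one_le_of_nonpos hb.le (neg_nonpos.2 hx)
  have := rpow_nonneg (zero_le_one.trans hb.le) (-x)
  constructor <;> linarith

lemma maxTail_nonneg (hb : 1 < b) {x : ℝ} (hx : 0 ≤ x) : 0 ≤ maxTail b ℓ x := by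
  obtain ⟨h0, h1⟩ := one_sub_rpow_neg_mem_Icc hb hx
  simpa [maxTail] using pow_le_one₀ h0 h1

lemma maxTail_le_one (hb : 1 < b) {x : ℝ} (hx : 0 ≤ x) : maxTail b ℓ x ≤ 1 := by
  simpa [maxTail] using pow_nonneg (one_sub_rpow_neg_mem_Icc hb hx).1 ℓ

lemma maxTail_zero {ℓ : ℕ} (hℓ : ℓ ≠ 0) : maxTail b ℓ 0 = 1 := by
  simp [maxTail, hℓ]

lemma maxTail_antitoneOn (hb : 1 < b) : AntitoneOn (maxTail b ℓ) (Set.Ici 0) := by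
  intro x hx y _ hxy
  have : b ^ (-y) ≤ b ^ (-x) := rpow_le_rpow_of_exponent_le hb.le (neg_le_neg hxy)
  simp only [maxTail]
  gcongr
  · exact (one_sub_rpow_neg_mem_Icc hb hx).1

lemma hasDerivAt_maxTailPrimitive (hb : 1 < b) (x : ℝ) :
    HasDerivAt (maxTailPrimitive b ℓ) (maxTail b ℓ x) x := by
  have hu : HasDerivAt (fun y => 1 - b ^ (-y)) (b ^ (-x) * log b) x := by
    simpa using ((hasStrictDerivAt_const_rpow (by linarith) (-x)).hasDerivAt.comp x
      (hasDerivAt_neg x)).const_sub 1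
  have hsum : HasDerivAt (fun y => ∑ i ∈ range ℓ, (1 - b ^ (-y)) ^ (i + 1) / (i + 1))
      (∑ i ∈ range ℓ, (1 - b ^ (-x)) ^ i * (b ^ (-x) * log b)) x := by
    refine HasDerivAt.fun_sum fun i _ =>
      ((hu.pow (i + 1)).div_const ((i : ℝ) + 1)).congr_deriv ?_
    push_cast
    field_simp
  refine (hsum.div_const (log b)).congr_deriv ?_
  rw [← sum_mul, ← mul_assoc, mul_div_cancel_right₀ _ (log_pos hb).ne']
  simpa [maxTail] using geom_sum_mul_neg (1 - b ^ (-x)) ℓ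

lemma maxTailPrimitive_zero : maxTailPrimitive b ℓ 0 = 0 := by
  simp [maxTailPrimitive]

lemma integral_maxTail (hb : 1 < b) {x : ℝ} (hx : 0 ≤ x) :
    ∫ y in (0 : ℝ)..x, maxTail b ℓ y = maxTailPrimitive b ℓ x := by
  have hanti : AntitoneOn (maxTail b ℓ) (Set.uIcc 0 x) :=
    (maxTail_antitoneOn ℓ hb).mono (by simp [Set.uIcc_of_le hx, Set.Icc_subset_Ici_self])
  rw [intervalIntegral.integral_eq_sub_of_hasDerivAt
    (fun y _ => hasDerivAt_maxTailPrimitive ℓ hb y) hanti.intervalIntegrable,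
    maxTailPrimitive_zero, sub_zero]

lemma maxTailPrimitive_le (hb : 1 < b) {x : ℝ} (hx : 0 ≤ x) :
    maxTailPrimitive b ℓ x ≤ harmonic ℓ / log b := by
  obtain ⟨h0, h1⟩ := one_sub_rpow_neg_mem_Icc hb hx
  rw [maxTailPrimitive, cast_harmonic]
  gcongr with i
  · exact (log_pos hb).le
  · exact pow_le_one₀ h0 h1

lemma tendsto_maxTailPrimitive (hb : 1 < b) :
    Tendsto (fun N : ℕ => maxTailPrimitive b ℓ N) atTop (𝓝 (harmonic ℓ / log b)) := by
  have hpow : Tendsto (fun N : ℕ => b ^ (-(N : ℝ))) atTop (𝓝 0) := by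
    simpa [rpow_neg (zero_le_one.trans hb.le)] using
      tendsto_pow_atTop_nhds_zero_of_lt_one (inv_nonneg.2 (zero_le_one.trans hb.le))
        (inv_lt_one_of_one_lt₀ hb)
  have hcont : Continuous fun t : ℝ => (∑ i ∈ range ℓ, (1 - t) ^ (i + 1) / (i + 1)) / log b :=
    by fun_prop
  convert (hcont.tendsto 0).comp hpow using 2
  · rfl
  · simp [cast_harmonic]

lemma sum_range_maxTail_succ_le (hb : 1 < b) (N : ℕ) :
    ∑ k ∈ range N, maxTail b ℓ (k + 1) ≤ harmonic ℓ / log b := by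
  have hanti : AntitoneOn (maxTail b ℓ) (Set.Icc 0 (0 + N)) :=
    (maxTail_antitoneOn ℓ hb).mono Set.Icc_subset_Ici_self
  calc ∑ k ∈ range N, maxTail b ℓ (k + 1) ≤ ∫ x in (0 : ℝ)..N, maxTail b ℓ x := by
        simpa using hanti.sum_le_integral
    _ = maxTailPrimitive b ℓ N := integral_maxTail ℓ hb N.cast_nonneg
    _ ≤ harmonic ℓ / log b := maxTailPrimitive_le ℓ hb N.cast_nonneg

lemma maxTailPrimitive_le_sum_range (hb : 1 < b) (N : ℕ) :
    maxTailPrimitive b ℓ N ≤ ∑ k ∈ range N, maxTail b ℓ k := by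
  have hanti : AntitoneOn (maxTail b ℓ) (Set.Icc 0 (0 + N)) :=
    (maxTail_antitoneOn ℓ hb).mono Set.Icc_subset_Ici_self
  rw [← integral_maxTail ℓ hb N.cast_nonneg]
  simpa using hanti.integral_le_sum

lemma summable_maxTail_succ (hb : 1 < b) : Summable fun k : ℕ => maxTail b ℓ (k + 1) :=
  summable_of_sum_range_le (fun k => maxTail_nonneg ℓ hb (by positivity))
    (sum_range_maxTail_succ_le ℓ hb)

lemma tsum_maxTail_succ_le (hb : 1 < b) :
    ∑' k : ℕ, maxTail b ℓ (k + 1) ≤ harmonic ℓ / log b :=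
  Real.tsum_le_of_sum_range_le (fun k => maxTail_nonneg ℓ hb (by positivity))
    (sum_range_maxTail_succ_le ℓ hb)

lemma harmonic_div_log_sub_one_le_tsum_maxTail_succ (hb : 1 < b) :
    harmonic ℓ / log b - 1 ≤ ∑' k : ℕ, maxTail b ℓ (k + 1) := by
  have hbound (N : ℕ) : maxTailPrimitive b ℓ N ≤ ∑' k : ℕ, maxTail b ℓ (k + 1) + 1 :=
    calc maxTailPrimitive b ℓ N
        ≤ ∑ k ∈ range (N + 1), maxTail b ℓ k := by
          refine (maxTailPrimitive_le_sum_range ℓ hb N).trans ?_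
          rw [sum_range_succ]
          linarith [maxTail_nonneg ℓ hb N.cast_nonneg]
      _ = ∑ k ∈ range N, maxTail b ℓ (k + 1) + maxTail b ℓ 0 := by
          simp [sum_range_succ']
      _ ≤ ∑' k : ℕ, maxTail b ℓ (k + 1) + 1 := by
          gcongr
          · exact (summable_maxTail_succ ℓ hb).sum_le_tsum _
              (fun k _ => maxTail_nonneg ℓ hb (by positivity))
          · exact maxTail_le_one ℓ hb le_rfl
  linarith [le_of_tendsto' (tendsto_maxTailPrimitive ℓ hb) hbound]

lemma logb_add_one_div_mul_log_sub_one_le_tsum_maxTail_succ (hb : 1 < b) (hℓ : ℓ ≠ 0) :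
    logb b ℓ + 1 / (ℓ * log b) - 1 ≤ ∑' k : ℕ, maxTail b ℓ (k + 1) := by
  have hlog := log_pos hb
  calc logb b ℓ + 1 / (ℓ * log b) - 1 = (log ℓ + (ℓ : ℝ)⁻¹) / log b - 1 := by
        rw [logb]
        field_simp
    _ ≤ harmonic ℓ / log b - 1 := by
        gcongr
        exact log_add_inv_le_harmonic hℓ
    _ ≤ ∑' k : ℕ, maxTail b ℓ (k + 1) := harmonic_div_log_sub_one_le_tsum_maxTail_succ ℓ hb

lemma tsum_maxTail_succ_le_logb_add_one_div_log (hb : 1 < b) :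
    ∑' k : ℕ, maxTail b ℓ (k + 1) ≤ logb b ℓ + 1 / log b := by
  have hlog := log_pos hb
  calc ∑' k : ℕ, maxTail b ℓ (k + 1) ≤ harmonic ℓ / log b := tsum_maxTail_succ_le ℓ hb
    _ ≤ (1 + log ℓ) / log b := by
        gcongr
        exact harmonic_le_one_add_log ℓ
    _ = logb b ℓ + 1 / log b := by rw [logb, add_div, add_comm]

end MaxTail

lemma Finset.measurable_sup_apply {δ α ι : Type*} [MeasurableSpace δ] [MeasurableSpace α]
    [SemilatticeSup α] [OrderBot α] [MeasurableSup₂ α] {s : Finset ι} {f : ι → δ → α}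
    (hf : ∀ i ∈ s, Measurable (f i)) : Measurable fun x => s.sup (f · x) := by
  classical
  induction s using Finset.induction_on with
  | empty => simp
  | insert i s _ ih =>
    simp only [sup_insert]
    exact (hf i (mem_insert_self i s)).sup (ih fun j hj => hf j (mem_insert_of_mem hj))

section Probability

variable {Ω : Type*} [MeasurableSpace Ω] {μ : Measure Ω}

/-- `X = 1 + Y` with `Y` geometric of success probability `1/2` on `{1, 2, …}`. -/
def IsShiftedGeometricHalf (μ : Measure Ω) (X : Ω → ℕ) : Prop :=
  ∀ k, 1 ≤ k → μ {ω | X ω = k + 1} = ENNReal.ofReal ((1 / 2 : ℝ) ^ k)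

lemma lintegral_natCast_eq_tsum_measure_lt {M : Ω → ℕ} (hM : Measurable M) :
    ∫⁻ ω, (M ω : ℝ≥0∞) ∂μ = ∑' m : ℕ, μ {ω | m < M ω} := by
  have hset (m : ℕ) : MeasurableSet {ω | m < M ω} := hM measurableSet_Ioi
  have hcount (ω : Ω) : (M ω : ℝ≥0∞) = ∑' m : ℕ, {ω' | m < M ω'}.indicator 1 ω := by
    rw [tsum_eq_sum (s := range (M ω)) fun m hm => Set.indicator_of_notMem (by simpa using hm) _,
      sum_congr rfl fun m hm => Set.indicator_of_mem (by simpa using hm) _]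
    simp
  simp_rw [hcount]
  rw [lintegral_tsum fun m => (measurable_one.indicator (hset m)).aemeasurable]
  simp_rw [lintegral_indicator_one (hset _)]

lemma ProbabilityTheory.iIndepFun.measure_sup_le_eq_prod {ι : Type*} [Fintype ι]
    {X : ι → Ω → ℕ} (hX : iIndepFun X μ) (m : ℕ) :
    μ {ω | univ.sup (X · ω) ≤ m} = ∏ i, μ {ω | X i ω ≤ m} := by
  have hinter : {ω | univ.sup (X · ω) ≤ m} = ⋂ i, {ω | X i ω ≤ m} := by
    ext
    simp
  rw [hinter]
  exact hX.meas_iInter fun i => ⟨Set.Iic m, measurableSet_Iic, rfl⟩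

lemma IsShiftedGeometricHalf.measure_add_one_lt {X : Ω → ℕ} (hX : Measurable X)
    (hdist : IsShiftedGeometricHalf μ X) (m : ℕ) :
    μ {ω | m + 1 < X ω} = ENNReal.ofReal ((1 / 2 : ℝ) ^ m) := by
  have hunion : {ω | m + 1 < X ω} = ⋃ j : ℕ, {ω | X ω = m + 1 + j + 1} := by
    ext ω
    simp only [Set.mem_ofPred_eq, Set.mem_iUnion]
    exact ⟨fun h => ⟨X ω - (m + 2), by omega⟩, fun ⟨j, hj⟩ => by omega⟩
  have hdisj : Pairwise (Function.onFun Disjoint fun j : ℕ => {ω | X ω = m + 1 + j + 1}) :=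
    fun i j hij => Set.disjoint_left.2 fun ω hi hj => hij (by simp_all)
  have hsum : Summable fun j : ℕ => (1 / 2 : ℝ) ^ (m + 1 + j) := by
    simpa [pow_add] using (summable_geometric_two).mul_left ((1 / 2 : ℝ) ^ (m + 1))
  rw [hunion, measure_iUnion hdisj fun j => hX (measurableSet_singleton _),
    tsum_congr fun j => hdist (m + 1 + j) (by omega),
    ← ENNReal.ofReal_tsum_of_nonneg (fun j => by positivity) hsum]
  simp_rw [pow_add]
  rw [tsum_mul_left, tsum_geometric_two]
  ring_nf

lemma IsShiftedGeometricHalf.measure_le_add_one [IsProbabilityMeasure μ] {X : Ω → ℕ} (hX : Measurable X)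
    (hdist : IsShiftedGeometricHalf μ X) (m : ℕ) :
    μ {ω | X ω ≤ m + 1} = ENNReal.ofReal (1 - (1 / 2 : ℝ) ^ m) := by
  have hcompl : {ω | X ω ≤ m + 1} = {ω | m + 1 < X ω}ᶜ := by
    ext
    simp
  rw [hcompl, prob_compl_eq_one_sub (s := {ω | m + 1 < X ω}) (hX measurableSet_Ioi),
    hdist.measure_add_one_lt hX, ← ENNReal.ofReal_one, ← ENNReal.ofReal_sub _ (by positivity)]

lemma measure_add_one_lt_sup_of_geometric [IsProbabilityMeasure μ] {ι : Type*} [Fintype ι]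
    {X : ι → Ω → ℕ} (hmeas : ∀ i, Measurable (X i)) (hindep : iIndepFun X μ)
    (hdist : ∀ i, IsShiftedGeometricHalf μ (X i)) (m : ℕ) :
    μ {ω | m + 1 < univ.sup (X · ω)} = ENNReal.ofReal (maxTail 2 (Fintype.card ι) m) := by
  have hcompl : {ω | m + 1 < univ.sup (X · ω)} = {ω | univ.sup (X · ω) ≤ m + 1}ᶜ := by
    ext
    simp
  have hpow : (2 : ℝ) ^ (-(m : ℝ)) = (1 / 2) ^ m := by
    rw [rpow_neg zero_le_two, rpow_natCast, one_div, inv_pow]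
  have hle : (0 : ℝ) ≤ 1 - (1 / 2) ^ m := sub_nonneg.2 (pow_le_one₀ (by norm_num) (by norm_num))
  rw [hcompl, prob_compl_eq_one_sub (s := {ω | univ.sup (X · ω) ≤ m + 1})
      ((measurable_sup_apply fun i _ => hmeas i) measurableSet_Iic),
    hindep.measure_sup_le_eq_prod,
    prod_congr rfl fun i _ => (hdist i).measure_le_add_one (hmeas i) m, prod_const,
    card_univ, ← ENNReal.ofReal_pow hle, ← ENNReal.ofReal_one,
    ← ENNReal.ofReal_sub _ (by positivity), maxTail, hpow]

lemma lintegral_sup_of_geometric [IsProbabilityMeasure μ] {ι : Type*} [Fintype ι] [Nonempty ι]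
    {X : ι → Ω → ℕ} (hmeas : ∀ i, Measurable (X i)) (hindep : iIndepFun X μ)
    (hdist : ∀ i, IsShiftedGeometricHalf μ (X i)) :
    ∫⁻ ω, ((univ.sup (X · ω) : ℕ) : ℝ≥0∞) ∂μ
      = 2 + ENNReal.ofReal (∑' k : ℕ, maxTail 2 (Fintype.card ι) (k + 1)) := by
  have htail := measure_add_one_lt_sup_of_geometric hmeas hindep hdist
  have hmax0 : maxTail 2 (Fintype.card ι) 0 = 1 := maxTail_zero Fintype.card_ne_zero
  have hpos : μ {ω | 0 < univ.sup (X · ω)} = 1 := by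
    refine le_antisymm prob_le_one ?_
    calc 1 = μ {ω | 0 + 1 < univ.sup (X · ω)} := by
          rw [htail, Nat.cast_zero, hmax0, ENNReal.ofReal_one]
      _ ≤ μ {ω | 0 < univ.sup (X · ω)} := measure_mono fun ω h => by
          simp only [Set.mem_ofPred_eq] at h ⊢
          omega
  rw [lintegral_natCast_eq_tsum_measure_lt (measurable_sup_apply fun i _ => hmeas i),
    tsum_eq_zero_add' ENNReal.summable, hpos]
  simp_rw [htail]
  rw [tsum_eq_zero_add' ENNReal.summable, ENNReal.ofReal_tsum_of_nonneg
    (fun k => maxTail_nonneg _ one_lt_two (by positivity)) (summable_maxTail_succ _ one_lt_two)]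
  push_cast
  rw [hmax0, ENNReal.ofReal_one, ← add_assoc, one_add_one_eq_two]

lemma integral_sup_of_geometric [IsProbabilityMeasure μ] {ι : Type*} [Fintype ι] [Nonempty ι]
    {X : ι → Ω → ℕ} (hmeas : ∀ i, Measurable (X i)) (hindep : iIndepFun X μ)
    (hdist : ∀ i, IsShiftedGeometricHalf μ (X i)) :
    ∫ ω, ((univ.sup (X · ω) : ℕ) : ℝ) ∂μ = 2 + ∑' k : ℕ, maxTail 2 (Fintype.card ι) (k + 1) := by
  have hM : Measurable fun ω => ((univ.sup (X · ω) : ℕ) : ℝ≥0∞) :=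
    measurable_from_nat.comp (measurable_sup_apply fun i _ => hmeas i)
  have hcast (ω : Ω) : ((univ.sup (X · ω) : ℕ) : ℝ) = ((univ.sup (X · ω) : ℕ) : ℝ≥0∞).toReal :=
    (ENNReal.toReal_natCast _).symm
  rw [integral_congr_ae (ae_of_all _ hcast),
    integral_toReal hM.aemeasurable (ae_of_all _ fun ω => ENNReal.natCast_lt_top _),
    lintegral_sup_of_geometric hmeas hindep hdist,
    ENNReal.toReal_add (by simp) ENNReal.ofReal_ne_top,
    ENNReal.toReal_ofReal (tsum_nonneg fun k => maxTail_nonneg _ one_lt_two (by positivity))]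
  simp

end Probability

/-- `E(ℓ,2) = E[max_i X i]`, where the `X i = 1 + Y i` are independent with
`Y i` geometric of success probability `1/2` (so `P[X i = k+1] = (1/2)^k` for `k ≥ 1`),
satisfies `1 + log₂ ℓ + 1/(ℓ ln 2) ≤ E(ℓ,2) ≤ 2 + log₂ ℓ + 1/ln 2`. -/
theorem stmt_4 {Ω : Type*} [MeasurableSpace Ω] (μ : Measure Ω) [IsProbabilityMeasure μ]
    (ℓ : ℕ) (hℓ : 1 ≤ ℓ) (X : Fin ℓ → Ω → ℕ)
    (hmeas : ∀ i, Measurable (X i))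
    (hindep : iIndepFun X μ)
    (hdist : ∀ i k, 1 ≤ k → μ {ω | X i ω = k + 1} = ENNReal.ofReal ((1 / 2 : ℝ) ^ k)) :
    1 + Real.logb 2 ℓ + 1 / (ℓ * Real.log 2)
        ≤ ∫ ω, ((univ.sup fun i => X i ω : ℕ) : ℝ) ∂μ
      ∧ ∫ ω, ((univ.sup fun i => X i ω : ℕ) : ℝ) ∂μ
        ≤ 2 + Real.logb 2 ℓ + 1 / Real.log 2 := by
  have : Nonempty (Fin ℓ) := ⟨⟨0, hℓ⟩⟩
  rw [integral_sup_of_geometric hmeas hindep hdist, Fintype.card_fin]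
  constructor
  · linarith [logb_add_one_div_mul_log_sub_one_le_tsum_maxTail_succ ℓ one_lt_two (by omega)]
  · linarith [tsum_maxTail_succ_le_logb_add_one_div_log ℓ one_lt_two]
end

section
/- For every ℓ ≥ 1 and ω ≥ 2, E(ℓ,ω) ≤ 1 + log_2(ωℓ)/log_2(ω/(ω−1)) + ω. -/
/-
By inclusion–exclusion, `γ_{ω,m}` is the probability that a uniformly random map
`Fin m → Fin ω` misses some value. Hence `0 ≤ γ_{ω,m} ≤ 1` and, by the union bound over the
missed value, `γ_{ω,m} ≤ ω r^m` with `r = (ω-1)/ω`. Bernoulli's inequality then bounds the `m`-th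
term of `E(ℓ,ω)` by `min(1, ωℓ r^m)`. Bounding the first `N = ⌈log_{1/r}(ωℓ)⌉` terms by `1` and
the rest by the geometric tail `ωℓ r^N / (1 - r) ≤ ω` gives the claim, as `N < log_{1/r}(ωℓ) + 1`.
-/

open Finset

/-- `γ_{ω,m} = (1/ω^m) ∑_{i=1}^{ω} C(ω,i) (-1)^{i+1} (ω-i)^m`. -/
noncomputable def gam (w m : ℕ) : ℝ :=
  (1 / (w : ℝ) ^ m) * ∑ i ∈ Icc 1 w, (w.choose i : ℝ) * (-1) ^ (i + 1) * ((w - i : ℕ) : ℝ) ^ m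

theorem Finset.card_inf_compl_eq_sum_choose {ι α : Type*} [Fintype ι] [Fintype α] [DecidableEq α]
    (S : ι → Finset α) (g : ℕ → ℕ) (hS : ∀ t : Finset ι, #(t.inf S) = g #t) :
    (#(univ.inf fun i ↦ (S i)ᶜ) : ℤ) =
      ∑ i ∈ range (Fintype.card ι + 1), (-1) ^ i * (Fintype.card ι).choose i * (g i : ℤ) := by
  rw [inclusion_exclusion_card_inf_compl]
  simp_rw [hS]
  rw [sum_powerset_apply_card (fun k ↦ (-1 : ℤ) ^ k * (g k : ℤ)), card_univ]
  simp only [nsmul_eq_mul]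
  exact sum_congr rfl fun _ _ ↦ by ring

def mapsMissing (m : ℕ) {w : ℕ} (j : Fin w) : Finset (Fin m → Fin w) :=
  Fintype.piFinset fun _ ↦ {j}ᶜ

lemma card_mapsMissing (m : ℕ) {w : ℕ} (j : Fin w) : #(mapsMissing m j) = (w - 1) ^ m := by
  simp [mapsMissing, card_compl]

lemma card_inf_mapsMissing (m : ℕ) {w : ℕ} (t : Finset (Fin w)) :
    #(t.inf (mapsMissing m)) = (w - #t) ^ m := by
  have hinf : t.inf (mapsMissing m) = Fintype.piFinset fun _ ↦ tᶜ := by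
    ext f
    simp only [mapsMissing, mem_inf, Fintype.mem_piFinset, mem_compl, mem_singleton]
    exact ⟨fun h x hx ↦ h _ hx x rfl, fun h j hj x hfx ↦ h x (hfx ▸ hj)⟩
  simp [hinf, card_compl]

lemma card_biUnion_mapsMissing (w m : ℕ) :
    (#(univ.biUnion (mapsMissing (w := w) m)) : ℤ) =
      ∑ i ∈ Icc 1 w, (w.choose i : ℤ) * (-1) ^ (i + 1) * ((w - i : ℕ) : ℤ) ^ m := by
  have hcompl : (#(univ.biUnion (mapsMissing (w := w) m)) : ℤ) =
      w ^ m - #(univ.inf fun j ↦ (mapsMissing (w := w) m j)ᶜ) := by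
    rw [eq_sub_iff_add_eq]
    norm_cast
    rw [← Finset.compl_sup, sup_eq_biUnion, card_add_card_compl]
    simp
  have hsurj := card_inf_compl_eq_sum_choose (mapsMissing (w := w) m) (fun k ↦ (w - k) ^ m)
    (card_inf_mapsMissing m)
  rw [Fintype.card_fin, range_eq_Ico, sum_eq_sum_Ico_succ_bot (Nat.succ_pos w),
    Nat.succ_eq_add_one, zero_add, Ico_add_one_right_eq_Icc] at hsurj
  rw [hcompl, hsurj]
  simp only [Int.reduceNeg, pow_zero, Nat.choose_zero_right, Nat.cast_one, mul_one, tsub_zero,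
    Nat.cast_pow, one_mul, sub_add_cancel_left, pow_succ, mul_neg, neg_mul, sum_neg_distrib,
    neg_inj]
  exact sum_congr rfl fun _ _ ↦ by ring

lemma gam_eq_card_div (w m : ℕ) :
    gam w m = #(univ.biUnion (mapsMissing (w := w) m)) / (w : ℝ) ^ m := by
  rw [gam, one_div, inv_mul_eq_div]
  congr 1
  exact_mod_cast congrArg (Int.cast : ℤ → ℝ) (card_biUnion_mapsMissing w m).symm

lemma gam_nonneg (w m : ℕ) : 0 ≤ gam w m := by
  rw [gam_eq_card_div]
  positivity

lemma gam_le_one (w m : ℕ) : gam w m ≤ 1 := by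
  rw [gam_eq_card_div]
  exact div_le_one_of_le₀ (by exact_mod_cast (card_le_univ _).trans_eq (by simp)) (by positivity)

lemma gam_le_geometric {w : ℕ} (hw : 1 ≤ w) (m : ℕ) :
    gam w m ≤ w * (((w : ℝ) - 1) / w) ^ m := by
  have hunion : #(univ.biUnion (mapsMissing (w := w) m)) ≤ w * (w - 1) ^ m :=
    card_biUnion_le.trans_eq (by simp [card_mapsMissing])
  rw [gam_eq_card_div, div_le_iff₀ (by positivity), div_pow, mul_assoc,
    div_mul_cancel₀ _ (by positivity)]
  exact_mod_cast (Nat.cast_le.2 hunion).trans_eq (by push_cast [Nat.cast_sub hw]; ring)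

lemma one_sub_one_sub_pow_le_mul {x : ℝ} (hx : x ≤ 2) (n : ℕ) : 1 - (1 - x) ^ n ≤ n * x := by
  have h := one_add_mul_le_pow (a := -x) (by linarith) n
  rw [← sub_eq_add_neg] at h
  linarith

theorem tsum_le_add_of_le_one_of_le_geometric {a : ℕ → ℝ} {C r : ℝ} (ha0 : ∀ m, 0 ≤ a m)
    (ha1 : ∀ m, a m ≤ 1) (hgeom : ∀ m, a m ≤ C * r ^ m) (hr0 : 0 ≤ r) (hr1 : r < 1) (N : ℕ) :
    ∑' m, a m ≤ N + C * r ^ N / (1 - r) := by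
  have hr := summable_geometric_of_lt_one hr0 hr1
  have ha : Summable a := (hr.mul_left C).of_nonneg_of_le ha0 hgeom
  rw [← ha.sum_add_tsum_nat_add N]
  gcongr
  · exact (sum_le_sum fun m _ ↦ ha1 m).trans_eq (by simp)
  · calc ∑' m, a (m + N) ≤ ∑' m, C * r ^ N * r ^ m :=
          ((summable_nat_add_iff N).2 ha).tsum_le_tsum
            (fun m ↦ (hgeom _).trans_eq (by ring)) (hr.mul_left _)
      _ = C * r ^ N / (1 - r) := by
          rw [tsum_mul_left, tsum_geometric_of_lt_one hr0 hr1, div_eq_mul_inv]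

lemma Real.le_pow_ceil_logb {b x : ℝ} (hb : 1 < b) (hx : 0 < x) : x ≤ b ^ ⌈Real.logb b x⌉₊ := by
  rw [← Real.rpow_natCast, ← Real.logb_le_iff_le_rpow hb hx]
  exact Nat.le_ceil _

/-- `E(ℓ,ω) = ∑_{m=0}^∞ (1 - (1 - γ_{ω,m})^ℓ)` satisfies
`E(ℓ,ω) ≤ 1 + log₂(ωℓ)/log₂(ω/(ω-1)) + ω`. -/
theorem stmt_5 (ℓ w : ℕ) (hℓ : 1 ≤ ℓ) (hw : 2 ≤ w) :
    ∑' m : ℕ, (1 - (1 - gam w m) ^ ℓ)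
      ≤ 1 + Real.logb 2 ((w : ℝ) * ℓ) / Real.logb 2 ((w : ℝ) / ((w : ℝ) - 1)) + w := by
  have hwR : (2 : ℝ) ≤ w := by exact_mod_cast hw
  have hwℓ : (1 : ℝ) ≤ w * ℓ := one_le_mul_of_one_le_of_one_le (by linarith) (by exact_mod_cast hℓ)
  set b : ℝ := w / (w - 1) with hb_def
  have hb : 1 < b := by rw [hb_def, one_lt_div (by linarith)]; linarith
  set N := ⌈Real.logb b (w * ℓ)⌉₊
  have hN : (N : ℝ) ≤ Real.logb b (w * ℓ) + 1 :=
    (Nat.ceil_lt_add_one (Real.logb_nonneg hb hwℓ)).le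
  have hlogb : Real.logb 2 (w * ℓ) / Real.logb 2 b = Real.logb b (w * ℓ) :=
    div_div_div_cancel_right₀ (Real.log_pos one_lt_two).ne' _ _
  have htail : (w * ℓ : ℝ) * b⁻¹ ^ N / (1 - b⁻¹) ≤ w := by
    have hpow : (w * ℓ : ℝ) / b ^ N ≤ 1 :=
      div_le_one_of_le₀ (Real.le_pow_ceil_logb hb (by positivity)) (by positivity)
    have hgap : 1 - b⁻¹ = (w : ℝ)⁻¹ := by rw [hb_def, inv_div]; field_simp; ring
    rw [hgap, div_inv_eq_mul, inv_pow, ← div_eq_mul_inv]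
    exact mul_le_of_le_one_left (by positivity) hpow
  have hγ : ∀ m, 0 ≤ 1 - gam w m ∧ 1 - gam w m ≤ 1 := fun m ↦
    ⟨by linarith [gam_le_one w m], by linarith [gam_nonneg w m]⟩
  calc ∑' m : ℕ, (1 - (1 - gam w m) ^ ℓ) ≤ N + (w * ℓ : ℝ) * b⁻¹ ^ N / (1 - b⁻¹) := by
        refine tsum_le_add_of_le_one_of_le_geometric
          (fun m ↦ sub_nonneg.2 (pow_le_one₀ (hγ m).1 (hγ m).2))
          (fun m ↦ sub_le_self _ (pow_nonneg (hγ m).1 _))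
          (fun m ↦ ?_) (by positivity) (inv_lt_one_of_one_lt₀ hb) N
        calc 1 - (1 - gam w m) ^ ℓ ≤ ℓ * gam w m :=
              one_sub_one_sub_pow_le_mul (by linarith [gam_le_one w m]) ℓ
          _ ≤ ℓ * (w * b⁻¹ ^ m) := by
              rw [hb_def, inv_div]; gcongr; exact gam_le_geometric (by omega) m
          _ = w * ℓ * b⁻¹ ^ m := by ring
    _ ≤ 1 + Real.logb 2 ((w : ℝ) * ℓ) / Real.logb 2 b + w := by rw [hlogb]; linarith
end

section
/- For the composite channel over alphabet Σ_q, the maximum likelihood decision does not depend on the number of transmissions: for any two composite symbols c_1, c_2 ∈ Σ_q^comp and any observed distribution τ realizable with both n_1 and n_2 transmissions (i.e., all coordinates of n_1·τ and n_2·τ are integers), P[Θ(X^{c_1}_{n_1}) = τ] ≥ P[Θ(X^{c_2}_{n_1}) = τ] if and only if P[Θ(X^{c_1}_{n_2}) = τ] ≥ P[Θ(X^{c_2}_{n_2}) = τ]. -/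
open Finset

/-! Since `k₁ / n₁ = k₂ / n₂`, the product `∏ cᵢ ^ k₂ᵢ` raised to the power `n₁` equals
`∏ cᵢ ^ k₁ᵢ` raised to the power `n₂`. The multinomial factors are positive and cancel, and
`x ↦ x ^ n` is strictly monotone on nonnegative reals, so both comparisons agree. -/

theorem pow_le_pow_iff_of_pow_eq_pow {R : Type*} [Semiring R] [LinearOrder R]
    [IsStrictOrderedRing R] {a b a' b' : R} {m n : ℕ} (hm : m ≠ 0) (hn : n ≠ 0)
    (ha : 0 ≤ a) (hb : 0 ≤ b) (ha' : 0 ≤ a') (hb' : 0 ≤ b')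
    (hpa : a ^ m = a' ^ n) (hpb : b ^ m = b' ^ n) :
    a ≤ b ↔ a' ≤ b' := by
  rw [← pow_le_pow_iff_left₀ ha hb hm, hpa, hpb, pow_le_pow_iff_left₀ ha' hb' hn]

theorem Finset.prod_pow_pow_eq_of_mul_eq {ι M : Type*} [CommMonoid M] (s : Finset ι)
    (c : ι → M) {k₁ k₂ : ι → ℕ} {n₁ n₂ : ℕ} (hk : ∀ i, k₁ i * n₂ = k₂ i * n₁) :
    (∏ i ∈ s, c i ^ k₁ i) ^ n₂ = (∏ i ∈ s, c i ^ k₂ i) ^ n₁ := by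
  simp only [← prod_pow, ← pow_mul, hk]

theorem stmt_9_general (q n₁ n₂ : ℕ) (hn₁ : 1 ≤ n₁) (hn₂ : 1 ≤ n₂)
    (c₁ c₂ : Fin q → ℝ)
    (hc₁ : ∀ i, 0 ≤ c₁ i)
    (hc₂ : ∀ i, 0 ≤ c₂ i)
    (k₁ k₂ : Fin q → ℕ)
    (hτ : ∀ i, (k₁ i : ℝ) / n₁ = (k₂ i : ℝ) / n₂) :
    ((Nat.multinomial univ k₂ : ℝ) * ∏ i, c₂ i ^ k₂ i
        ≤ (Nat.multinomial univ k₂ : ℝ) * ∏ i, c₁ i ^ k₂ i)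
      ↔ ((Nat.multinomial univ k₁ : ℝ) * ∏ i, c₂ i ^ k₁ i
        ≤ (Nat.multinomial univ k₁ : ℝ) * ∏ i, c₁ i ^ k₁ i) := by
  have hk : ∀ i, k₂ i * n₁ = k₁ i * n₂ := fun i => by
    have := (div_eq_div_iff (by positivity) (by positivity)).mp (hτ i)
    exact_mod_cast this.symm
  have hprod_nonneg : ∀ (c : Fin q → ℝ) (k : Fin q → ℕ), (∀ i, 0 ≤ c i) → 0 ≤ ∏ i, c i ^ k i :=
    fun c k hc => prod_nonneg fun i _ => pow_nonneg (hc i) _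
  rw [mul_le_mul_iff_right₀ (by exact_mod_cast Nat.multinomial_pos _ _),
    mul_le_mul_iff_right₀ (by exact_mod_cast Nat.multinomial_pos _ _)]
  exact pow_le_pow_iff_of_pow_eq_pow (by omega) (by omega)
    (hprod_nonneg c₂ k₂ hc₂) (hprod_nonneg c₁ k₂ hc₁)
    (hprod_nonneg c₂ k₁ hc₂) (hprod_nonneg c₁ k₁ hc₁)
    (prod_pow_pow_eq_of_mul_eq _ _ hk) (prod_pow_pow_eq_of_mul_eq _ _ hk)

/-- the maximum-likelihood comparison between two composite symbols does not
depend on the number of transmissions.  An observed distribution `τ` realizable with both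
`n₁` and `n₂` transmissions is represented by count vectors `k₁, k₂` with `∑ k₁ = n₁`,
`∑ k₂ = n₂` and `k₁ i / n₁ = k₂ i / n₂` for all `i`; the probability of observing `τ` from a
composite symbol `c` with `n` transmissions is `multinomial(n; k) ∏ᵢ cᵢ^{kᵢ}`. -/
theorem stmt_9 (q n₁ n₂ : ℕ) (hq : 1 ≤ q) (hn₁ : 1 ≤ n₁) (hn₂ : 1 ≤ n₂)
    (c₁ c₂ : Fin q → ℝ)
    (hc₁ : ∀ i, 0 ≤ c₁ i) (hc₁s : ∑ i, c₁ i = 1)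
    (hc₂ : ∀ i, 0 ≤ c₂ i) (hc₂s : ∑ i, c₂ i = 1)
    (k₁ k₂ : Fin q → ℕ) (hk₁ : ∑ i, k₁ i = n₁) (hk₂ : ∑ i, k₂ i = n₂)
    (hτ : ∀ i, (k₁ i : ℝ) / n₁ = (k₂ i : ℝ) / n₂) :
    ((Nat.multinomial univ k₂ : ℝ) * ∏ i, c₂ i ^ k₂ i
        ≤ (Nat.multinomial univ k₂ : ℝ) * ∏ i, c₁ i ^ k₂ i)
      ↔ ((Nat.multinomial univ k₁ : ℝ) * ∏ i, c₂ i ^ k₁ i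
        ≤ (Nat.multinomial univ k₁ : ℝ) * ∏ i, c₁ i ^ k₁ i) :=
  stmt_9_general q n₁ n₂ hn₁ hn₂ c₁ c₂ hc₁ hc₂ k₁ k₂ hτ
end

section
/- For an (m,q)-composite code C, the following are equivalent: (1) the supports of distinct codewords are pairwise disjoint; (2) for every n and every c ∈ C, the MLD decodes c with success probability exactly 1. -/
open Finset
open scoped Classical

/-- The probability of observing the empirical count vector `k` (with `∑ k = n`) in an
`n`-transmission of the composite symbol `c`: `multinomial(n;k) ∏ᵢ cᵢ^{kᵢ}`. -/
noncomputable def pObs (q : ℕ) (c : Fin q → ℝ) (k : Fin q → ℕ) : ℝ :=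
  (Nat.multinomial univ k : ℝ) * ∏ i, c i ^ k i

lemma antidiagonalTuple_eq_piAntidiag (q n : ℕ) :
    Finset.Nat.antidiagonalTuple q n = Finset.piAntidiag univ n := by
  ext k
  simp [Finset.Nat.mem_antidiagonalTuple, Finset.mem_piAntidiag]

lemma pObs_nonneg (q : ℕ) (c : Fin q → ℝ) (hc : ∀ i, 0 ≤ c i) (k : Fin q → ℕ) :
    0 ≤ pObs q c k := by
  apply mul_nonneg (by positivity)
  exact Finset.prod_nonneg fun i _ => pow_nonneg (hc i) _

lemma sum_pObs (q n : ℕ) (c : Fin q → ℝ) (hc : ∑ i, c i = 1) :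
    ∑ k ∈ Finset.Nat.antidiagonalTuple q n, pObs q c k = 1 := by
  rw [antidiagonalTuple_eq_piAntidiag]
  have := Finset.sum_pow_eq_sum_piAntidiag (univ : Finset (Fin q)) c n
  rw [hc, one_pow] at this
  simp only [pObs]
  exact this.symm

/-- for an `(m,q)`-composite code `C`, the supports of distinct codewords are
pairwise disjoint iff for every `n ≥ 1`, every maximum-likelihood decoder decodes every
codeword with success probability exactly `1`. -/
theorem stmt_11 (q : ℕ) (hq : 1 ≤ q) (C : Finset (Fin q → ℝ))
    (hprob : ∀ c ∈ C, (∀ i, 0 ≤ c i) ∧ ∑ i, c i = 1) :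
    (∀ c₁ ∈ C, ∀ c₂ ∈ C, c₁ ≠ c₂ → ∀ i, ¬(0 < c₁ i ∧ 0 < c₂ i))
      ↔ (∀ n : ℕ, 1 ≤ n → ∀ D : (Fin q → ℕ) → (Fin q → ℝ),
          (∀ k, D k ∈ C ∧ ∀ c ∈ C, pObs q c k ≤ pObs q (D k) k) →
          ∀ c ∈ C, ∑ k ∈ Finset.Nat.antidiagonalTuple q n,
            (if D k = c then pObs q c k else 0) = 1) := by
  constructor
  · intro hdisj n hn D hD c hc
    have key : ∀ k ∈ Finset.Nat.antidiagonalTuple q n,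
        (if D k = c then pObs q c k else 0) = pObs q c k := by
      intro k hk
      by_cases hDk : D k = c
      · simp [hDk]
      · simp only [if_neg hDk]
        by_contra hne
        have hpos : 0 < pObs q c k :=
          lt_of_le_of_ne (pObs_nonneg q c (hprob c hc).1 k) hne
        -- there exists i with k i ≥ 1 (since ∑ k = n ≥ 1)
        have hsum : ∑ i, k i = n := (Finset.Nat.mem_antidiagonalTuple).1 hk
        have : ∃ i, k i ≠ 0 := by
          by_contra h
          push_neg at h
          simp [h] at hsum
          omega
        obtain ⟨i, hi⟩ := this
        -- c i > 0 since pObs c k > 0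
        have hprod : 0 < ∏ j, c j ^ k j := by
          rcases (mul_pos_iff.1 hpos) with ⟨_, h⟩ | ⟨h, _⟩
          · exact h
          · exact absurd h (not_lt.2 (by positivity))
        have hci : 0 < c i := by
          rcases lt_or_eq_of_le ((hprob c hc).1 i) with h | h
          · exact h
          · exfalso
            have h0 : (∏ j, c j ^ k j) = 0 :=
              Finset.prod_eq_zero (Finset.mem_univ i) (by rw [← h, zero_pow hi])
            rw [h0] at hprod
            exact lt_irrefl _ hprod
        -- D k has disjoint support from c, so (D k) i = 0
        have hDkC := (hD k).1
        have hdij := hdisj c hc (D k) hDkC (fun h => hDk h.symm) i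
        have hDki : (D k) i = 0 := by
          by_contra h
          exact hdij ⟨hci, lt_of_le_of_ne ((hprob _ hDkC).1 i) (Ne.symm h)⟩
        have : pObs q (D k) k = 0 := by
          unfold pObs
          rw [Finset.prod_eq_zero (Finset.mem_univ i) (by rw [hDki, zero_pow hi]), mul_zero]
        have hle := (hD k).2 c hc
        rw [this] at hle
        exact absurd hpos (not_lt.2 hle)
    exact (Finset.sum_congr rfl key).trans (sum_pObs q n c (hprob c hc).2)
  · intro hML c₁ hc₁ c₂ hc₂ hne i ⟨h₁, h₂⟩
    -- construct an ML decoder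
    have hCne : C.Nonempty := ⟨c₁, hc₁⟩
    have hex : ∀ k : Fin q → ℕ, ∃ d ∈ C, ∀ c ∈ C, pObs q c k ≤ pObs q d k := by
      intro k
      obtain ⟨d, hd, hmax⟩ := Finset.exists_max_image C (fun c => pObs q c k) hCne
      exact ⟨d, hd, hmax⟩
    choose D hDC hDmax using hex
    have hD : ∀ k, D k ∈ C ∧ ∀ c ∈ C, pObs q c k ≤ pObs q (D k) k :=
      fun k => ⟨hDC k, hDmax k⟩
    -- the observation k₀ = single i 1
    set k₀ : Fin q → ℕ := fun j => if j = i then 1 else 0 with hk₀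
    have hk₀mem : k₀ ∈ Finset.Nat.antidiagonalTuple q 1 := by
      rw [Finset.Nat.mem_antidiagonalTuple]
      simp [hk₀]
    have hpObs_pos : ∀ c : Fin q → ℝ, 0 < c i → 0 < pObs q c k₀ := by
      intro c hci
      unfold pObs
      apply mul_pos
      · exact_mod_cast Nat.multinomial_pos _ _
      · apply Finset.prod_pos
        intro j _
        by_cases hj : j = i
        · subst hj; simp [hk₀, hci]
        · simp [hk₀, hj]
    -- D k₀ differs from c₁ or c₂
    have : D k₀ ≠ c₁ ∨ D k₀ ≠ c₂ := by
      by_contra h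
      push_neg at h
      exact hne (h.1 ▸ h.2)
    rcases this with hd | hd
    · -- fails on c₁
      have hsum := hML 1 le_rfl D hD c₁ hc₁
      have hlt : ∑ k ∈ Finset.Nat.antidiagonalTuple q 1,
          (if D k = c₁ then pObs q c₁ k else 0) < ∑ k ∈ Finset.Nat.antidiagonalTuple q 1,
          pObs q c₁ k := by
        apply Finset.sum_lt_sum
        · intro k _
          by_cases h : D k = c₁
          · simp [h]
          · simp [h, pObs_nonneg q c₁ (hprob c₁ hc₁).1 k]
        · exact ⟨k₀, hk₀mem, by simp [hd, hpObs_pos c₁ h₁]⟩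
      rw [hsum, sum_pObs q 1 c₁ (hprob c₁ hc₁).2] at hlt
      exact lt_irrefl _ hlt
    · have hsum := hML 1 le_rfl D hD c₂ hc₂
      have hlt : ∑ k ∈ Finset.Nat.antidiagonalTuple q 1,
          (if D k = c₂ then pObs q c₂ k else 0) < ∑ k ∈ Finset.Nat.antidiagonalTuple q 1,
          pObs q c₂ k := by
        apply Finset.sum_lt_sum
        · intro k _
          by_cases h : D k = c₂
          · simp [h]
          · simp [h, pObs_nonneg q c₂ (hprob c₂ hc₂).1 k]
        · exact ⟨k₀, hk₀mem, by simp [hd, hpObs_pos c₂ h₂]⟩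
      rw [hsum, sum_pObs q 1 c₂ (hprob c₂ hc₂).2] at hlt
      exact lt_irrefl _ hlt
end

section
/- Let n = rq with r ≥ 1, and for each distribution ρ = (i_1/n,…,i_q/n) with integer counts define β_n^ρ = multinomial(n; i_1,…,i_q) ∏_j (i_j/n)^{i_j}. Then the minimum of β_n^ρ over all such empirical distributions ρ is attained at the uniform distribution ρ_r = (r/n,…,r/n), i.e., min_ρ β_n^ρ = C(n; r,…,r)(1/q)^n. -/
open Finset

noncomputable def stmt15ff (k : ℕ) : ℝ := (k : ℝ) ^ k / (Nat.factorial k)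

noncomputable def stmt15g (k : ℕ) : ℝ := ((k + 1 : ℝ) / k) ^ k

lemma stmt15ff_pos (k : ℕ) : 0 < stmt15ff k := by
  unfold stmt15ff
  rcases Nat.eq_zero_or_pos k with h | h
  · subst h; norm_num
  · have : (0:ℝ) < k := by exact_mod_cast h
    positivity

lemma stmt15ff_succ (k : ℕ) : stmt15ff (k + 1) = stmt15g k * stmt15ff k := by
  rcases Nat.eq_zero_or_pos k with h | h
  · subst h; simp [stmt15ff, stmt15g]
  · have hk : (0:ℝ) < k := by exact_mod_cast h
    have hf : (0:ℝ) < (Nat.factorial k : ℝ) := by exact_mod_cast k.factorial_pos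
    unfold stmt15ff stmt15g
    rw [Nat.factorial_succ]
    push_cast
    rw [div_pow]
    field_simp
    ring

lemma stmt15g_mono : Monotone stmt15g := by
  apply monotone_nat_of_le_succ
  intro k
  rcases Nat.eq_zero_or_pos k with h | h
  · subst h; norm_num [stmt15g]
  · have hk : (0:ℝ) < k := by exact_mod_cast h
    have hk1 : (0:ℝ) < (k:ℝ) + 1 := by linarith
    -- Bernoulli: (1 - 1/(k+1)^2)^(k+1) ≥ 1 - (k+1)/(k+1)^2 = k/(k+1)
    have hx : (1:ℝ) / ((k:ℝ)+1)^2 ≤ 1 := by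
      rw [div_le_one (by positivity)]; nlinarith
    have hber := one_add_mul_le_pow (a := -(1 / ((k:ℝ)+1)^2)) (by linarith) (k+1)
    have h1 : (1 : ℝ) + (↑(k+1)) * (-(1 / ((k:ℝ)+1)^2)) = (k:ℝ) / ((k:ℝ)+1) := by
      push_cast; field_simp; ring
    have h2 : (1 : ℝ) + (-(1 / ((k:ℝ)+1)^2)) = ((k:ℝ) * ((k:ℝ)+2)) / ((k:ℝ)+1)^2 := by
      field_simp; ring
    rw [h1, h2] at hber
    -- hber : k/(k+1) ≤ (k(k+2)/(k+1)^2)^(k+1)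
    unfold stmt15g
    push_cast
    have hcast : ((k:ℝ)+1+1) = (k:ℝ)+2 := by ring
    rw [hcast]
    have key : ((k:ℝ)*((k:ℝ)+2) / ((k:ℝ)+1)^2) ^ (k+1) = (((k:ℝ)+1)/k)⁻¹ ^ (k+1) * (((k:ℝ)+2)/((k:ℝ)+1)) ^ (k+1) := by
      rw [← mul_pow]; congr 1; field_simp
    rw [key] at hber
    have hpos : (0:ℝ) < (((k:ℝ)+1)/k) ^ (k+1) := by positivity
    have := mul_le_mul_of_nonneg_left hber (le_of_lt hpos)
    rw [← mul_assoc, inv_pow, mul_inv_cancel₀ (ne_of_gt hpos), one_mul] at this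
    calc (((k:ℝ)+1)/k) ^ k = (((k:ℝ)+1)/k) ^ (k+1) * ((k:ℝ)/((k:ℝ)+1)) := by
          rw [pow_succ]; field_simp
      _ ≤ (((k:ℝ)+2)/((k:ℝ)+1)) ^ (k+1) := by
          rw [mul_comm] at this; linarith [this]

lemma stmt15_pair {a b : ℕ} (h : a + 1 ≤ b) :
    stmt15ff (a + 1) * stmt15ff (b - 1) ≤ stmt15ff a * stmt15ff b := by
  obtain ⟨c, rfl⟩ : ∃ c, b = c + 1 := ⟨b - 1, by omega⟩
  have hac : a ≤ c := by omega
  simp only [Nat.add_sub_cancel]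
  rw [stmt15ff_succ a, stmt15ff_succ c]
  have h1 := stmt15g_mono hac
  have p1 := stmt15ff_pos a
  have p2 := stmt15ff_pos c
  nlinarith [mul_pos p1 p2]

lemma stmt15_main (q r : ℕ) (hr : 1 ≤ r) :
    ∀ d : ℕ, ∀ k : Fin q → ℕ, (∑ i, Nat.dist (k i) r) = d → ∑ i, k i = r * q →
      stmt15ff r ^ q ≤ ∏ i, stmt15ff (k i) := by
  intro d
  induction d using Nat.strong_induction_on with
  | _ d IH =>
    intro k hd hsum
    by_cases hall : ∀ i, k i = r
    · have : ∏ i, stmt15ff (k i) = stmt15ff r ^ q := by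
        rw [Finset.prod_congr rfl (fun i _ => by rw [hall i]), Finset.prod_const,
          Finset.card_univ, Fintype.card_fin]
      rw [this]
    · push_neg at hall
      obtain ⟨i0, hi0⟩ := hall
      have hsum_r : ∑ _i : Fin q, r = r * q := by
        rw [Finset.sum_const, Finset.card_univ, Fintype.card_fin, smul_eq_mul, mul_comm]
      -- find i1 with k i1 < r and i2 with r < k i2
      have hex : (∃ i1, k i1 < r) ∧ (∃ i2, r < k i2) := by
        constructor
        · by_contra hc
          push_neg at hc
          have : ∑ _i : Fin q, r < ∑ i, k i :=
            Finset.sum_lt_sum (fun i _ => hc i) ⟨i0, Finset.mem_univ i0, lt_of_le_of_ne (hc i0) (Ne.symm hi0)⟩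
          omega
        · by_contra hc
          push_neg at hc
          have : ∑ i, k i < ∑ _i : Fin q, r :=
            Finset.sum_lt_sum (fun i _ => hc i) ⟨i0, Finset.mem_univ i0, lt_of_le_of_ne (hc i0) hi0⟩
          omega
      obtain ⟨⟨i1, hi1⟩, ⟨i2, hi2⟩⟩ := hex
      have hne : i1 ≠ i2 := by intro h; rw [h] at hi1; omega
      set k' : Fin q → ℕ := Function.update (Function.update k i1 (k i1 + 1)) i2 (k i2 - 1) with hk'
      have hk'i1 : k' i1 = k i1 + 1 := by
        simp [hk', Function.update_of_ne hne, Function.update_self]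
      have hk'i2 : k' i2 = k i2 - 1 := by simp [hk', Function.update_self]
      have hk'other : ∀ j, j ≠ i1 → j ≠ i2 → k' j = k j := by
        intro j h1 h2
        simp [hk', Function.update_of_ne h2, Function.update_of_ne h1]
      -- generic two-point decomposition
      have split : ∀ (F : Fin q → ℝ) , ∏ i, F i
          = F i1 * (F i2 * ∏ i ∈ (Finset.univ.erase i1).erase i2, F i) := by
        intro F
        rw [← Finset.mul_prod_erase _ _ (Finset.mem_univ i1),
            ← Finset.mul_prod_erase _ _ (Finset.mem_erase.2 ⟨Ne.symm hne, Finset.mem_univ i2⟩)]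
      have splitN : ∀ (F : Fin q → ℕ) , ∑ i, F i
          = F i1 + (F i2 + ∑ i ∈ (Finset.univ.erase i1).erase i2, F i) := by
        intro F
        rw [← Finset.add_sum_erase _ _ (Finset.mem_univ i1),
            ← Finset.add_sum_erase _ _ (Finset.mem_erase.2 ⟨Ne.symm hne, Finset.mem_univ i2⟩)]
      have hrest_eq : ∀ (F : ℕ → ℝ), ∏ i ∈ (Finset.univ.erase i1).erase i2, F (k' i)
          = ∏ i ∈ (Finset.univ.erase i1).erase i2, F (k i) := by
        intro F
        refine Finset.prod_congr rfl (fun j hj => ?_)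
        rw [Finset.mem_erase, Finset.mem_erase] at hj
        rw [hk'other j hj.2.1 hj.1]
      have hrestN_eq : ∑ i ∈ (Finset.univ.erase i1).erase i2, k' i
          = ∑ i ∈ (Finset.univ.erase i1).erase i2, k i := by
        refine Finset.sum_congr rfl (fun j hj => ?_)
        rw [Finset.mem_erase, Finset.mem_erase] at hj
        rw [hk'other j hj.2.1 hj.1]
      have hrestD_eq : ∑ i ∈ (Finset.univ.erase i1).erase i2, Nat.dist (k' i) r
          = ∑ i ∈ (Finset.univ.erase i1).erase i2, Nat.dist (k i) r := by
        refine Finset.sum_congr rfl (fun j hj => ?_)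
        rw [Finset.mem_erase, Finset.mem_erase] at hj
        rw [hk'other j hj.2.1 hj.1]
      -- new sum equals r*q
      have hsum' : ∑ i, k' i = r * q := by
        rw [splitN k', hk'i1, hk'i2, hrestN_eq]
        rw [splitN k] at hsum
        omega
      -- new distance decreases
      have hd' : ∑ i, Nat.dist (k' i) r < d := by
        rw [splitN (fun i => Nat.dist (k' i) r), hk'i1, hk'i2, hrestD_eq]
        rw [splitN (fun i => Nat.dist (k i) r)] at hd
        simp only [Nat.dist] at *
        omega
      have hIH := IH _ hd' k' rfl hsum'
      refine le_trans hIH ?_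
      rw [split (fun i => stmt15ff (k' i)), split (fun i => stmt15ff (k i)),
        hk'i1, hk'i2, hrest_eq]
      have hpair := stmt15_pair (a := k i1) (b := k i2) (by omega)
      have hrest_pos : 0 < ∏ i ∈ (Finset.univ.erase i1).erase i2, stmt15ff (k i) :=
        Finset.prod_pos (fun i _ => stmt15ff_pos _)
      calc stmt15ff (k i1 + 1) * (stmt15ff (k i2 - 1) * ∏ i ∈ (Finset.univ.erase i1).erase i2, stmt15ff (k i))
          = (stmt15ff (k i1 + 1) * stmt15ff (k i2 - 1)) * ∏ i ∈ (Finset.univ.erase i1).erase i2, stmt15ff (k i) := by ring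
        _ ≤ (stmt15ff (k i1) * stmt15ff (k i2)) * ∏ i ∈ (Finset.univ.erase i1).erase i2, stmt15ff (k i) :=
            mul_le_mul_of_nonneg_right hpair (le_of_lt hrest_pos)
        _ = stmt15ff (k i1) * (stmt15ff (k i2) * ∏ i ∈ (Finset.univ.erase i1).erase i2, stmt15ff (k i)) := by ring

lemma stmt15_beta_eq (q n : ℕ) (hn : 0 < n) (k : Fin q → ℕ) (hsum : ∑ i, k i = n) :
    (Nat.multinomial univ k : ℝ) * ∏ i, ((k i : ℝ) / n) ^ k i
      = ((Nat.factorial n : ℝ) / (n : ℝ) ^ n) * ∏ i, stmt15ff (k i) := by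
  have hfac : (0:ℝ) < ∏ i, ((Nat.factorial (k i)) : ℝ) :=
    Finset.prod_pos (fun i _ => by exact_mod_cast (k i).factorial_pos)
  have hmult : (Nat.multinomial univ k : ℝ) = (Nat.factorial n : ℝ) / ∏ i, ((Nat.factorial (k i)) : ℝ) := by
    rw [eq_div_iff (ne_of_gt hfac), mul_comm]
    have := Nat.multinomial_spec Finset.univ k
    rw [hsum] at this
    exact_mod_cast this
  have hnpos : (0:ℝ) < n := by exact_mod_cast hn
  have hprod : ∏ i, ((k i : ℝ) / n) ^ k i
      = (∏ i, (k i : ℝ) ^ k i) / (n : ℝ) ^ n := by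
    simp only [div_pow]
    rw [Finset.prod_div_distrib, Finset.prod_pow_eq_pow_sum, hsum]
  rw [hmult, hprod]
  unfold stmt15ff
  rw [Finset.prod_div_distrib]
  rw [div_mul_div_comm, div_mul_div_comm]
  ring_nf

/-- let `n = rq`.  For an empirical distribution given by counts
`k : Fin q → ℕ` with `∑ k = n`, set `β_n^k = multinomial(n;k) ∏ᵢ (kᵢ/n)^{kᵢ}`.  The minimum
of `β` over all empirical distributions is attained at the uniform counts `kᵢ = r`, and
`β` at the uniform counts equals `C(n; r,…,r)(1/q)^n`. -/
theorem stmt_15 (q r : ℕ) (hq : 1 ≤ q) (hr : 1 ≤ r) (n : ℕ) (hn : n = r * q) :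
    (∀ k : Fin q → ℕ, ∑ i, k i = n →
      (Nat.multinomial univ (fun _ : Fin q => r) : ℝ) * ∏ _i : Fin q, ((r : ℝ) / n) ^ r
        ≤ (Nat.multinomial univ k : ℝ) * ∏ i, ((k i : ℝ) / n) ^ k i)
    ∧ (Nat.multinomial univ (fun _ : Fin q => r) : ℝ) * ∏ _i : Fin q, ((r : ℝ) / n) ^ r
        = (Nat.multinomial univ (fun _ : Fin q => r) : ℝ) * (1 / (q : ℝ)) ^ n := by
  have hn1 : 0 < n := by rw [hn]; exact Nat.mul_pos hr hq
  have hsum_r : ∑ _i : Fin q, r = n := by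
    rw [Finset.sum_const, Finset.card_univ, Fintype.card_fin, smul_eq_mul, mul_comm, hn]
  constructor
  · intro k hk
    have hL := stmt15_beta_eq q n hn1 (fun _ => r) hsum_r
    have hR := stmt15_beta_eq q n hn1 k hk
    rw [hL, hR]
    have hmain := stmt15_main q r hr (∑ i, Nat.dist (k i) r) k rfl (by rw [hk, hn])
    have hffr : ∏ _i : Fin q, stmt15ff r = stmt15ff r ^ q := by
      rw [Finset.prod_const, Finset.card_univ, Fintype.card_fin]
    rw [hffr]
    apply mul_le_mul_of_nonneg_left (le_trans (le_of_eq rfl) hmain)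
    positivity
  · congr 1
    have hrn : (r : ℝ) / n = 1 / q := by
      rw [hn]
      have hr0 : (r:ℝ) ≠ 0 := by positivity
      have hq0 : (q:ℝ) ≠ 0 := by positivity
      push_cast
      field_simp
    rw [Finset.prod_const, Finset.card_univ, Fintype.card_fin, hrn, ← pow_mul, ← hn]
end
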